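/- Let 0 ≤ a ≤ a₂ ≤ 1 and, for odd k ≥ 3, define S_k = (a₂^{k-1} - a^{k-1})/(a₂² - a²) when a₂ ≠ a (interpreted as the polynomial ∑_{j=0}^{s-1} a₂^{2j} a^{2(s-1-j)} with k-1 = 2s). If a² + a₂² ≤ 1, then the sequence S_{k} over odd k ≥ 5 satisfies S_{k+2} ≤ S_k, i.e. it is decreasing. -/

import Mathlib

/-!
With `x = a₂²` and `y = a²`, `S_k` is the homogeneous geometric sum `G_s = ∑_{i<s} xⁱ y^(s-1-i)`,
which satisfies `G_{s+1} = xˢ + y G_s`. Its top term gives `x^(s-1) ≤ G_s`, so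
`G_{s+1} ≤ x G_s + y G_s ≤ G_s` as soon as `x + y ≤ 1`.
-/

open Finset

/-- The symmetric polynomial `S_k = ∑_{j=0}^{s-1} a₂^{2j} a^{2(s-1-j)}`, indexed by `s`
where `k - 1 = 2s` (so odd `k ≥ 3` corresponds to `s ≥ 1`, and `S_1 = 0`). -/
def Ssum (a a₂ : ℝ) (s : ℕ) : ℝ :=
  ∑ j ∈ Finset.range s, a₂ ^ (2 * j) * a ^ (2 * (s - 1 - j))

section GeomSum₂

variable {R : Type*} [CommRing R] [LinearOrder R] [IsStrictOrderedRing R] {x y : R}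

theorem geom_sum₂_nonneg (hx : 0 ≤ x) (hy : 0 ≤ y) (n : ℕ) :
    0 ≤ ∑ i ∈ range n, x ^ i * y ^ (n - 1 - i) :=
  sum_nonneg fun _ _ => by positivity

theorem pow_pred_le_geom_sum₂ (hx : 0 ≤ x) (hy : 0 ≤ y) {n : ℕ} (hn : n ≠ 0) :
    x ^ (n - 1) ≤ ∑ i ∈ range n, x ^ i * y ^ (n - 1 - i) := by
  have hmem : n - 1 ∈ range n := mem_range.mpr (by omega)
  simpa using single_le_sum (f := fun i => x ^ i * y ^ (n - 1 - i)) (fun i _ => by positivity) hmem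

theorem geom_sum₂_succ_le (hx : 0 ≤ x) (hy : 0 ≤ y) (hxy : x + y ≤ 1) {n : ℕ} (hn : n ≠ 0) :
    ∑ i ∈ range (n + 1), x ^ i * y ^ (n - i) ≤ ∑ i ∈ range n, x ^ i * y ^ (n - 1 - i) := by
  set G := ∑ i ∈ range n, x ^ i * y ^ (n - 1 - i)
  have hG : 0 ≤ G := geom_sum₂_nonneg hx hy n
  have hpow : x ^ n = x * x ^ (n - 1) := by rw [← pow_succ', Nat.sub_add_cancel (by omega)]
  calc ∑ i ∈ range (n + 1), x ^ i * y ^ (n - i) = x * x ^ (n - 1) + y * G := by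
        rw [geom_sum₂_succ_eq, hpow]
    _ ≤ x * G + y * G := by gcongr; exact pow_pred_le_geom_sum₂ hx hy hn
    _ = (x + y) * G := by ring
    _ ≤ 1 * G := by gcongr
    _ = G := one_mul G

end GeomSum₂

theorem Ssum_eq_geom_sum₂ (a a₂ : ℝ) (s : ℕ) :
    Ssum a a₂ s = ∑ i ∈ range s, (a₂ ^ 2) ^ i * (a ^ 2) ^ (s - 1 - i) := by
  simp only [Ssum, pow_mul]

theorem Ssum_decreasing_general (a a₂ : ℝ) (hsq : a ^ 2 + a₂ ^ 2 ≤ 1) :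
    ∀ s : ℕ, 2 ≤ s → Ssum a a₂ (s + 1) ≤ Ssum a a₂ s := by
  intro s hs
  rw [Ssum_eq_geom_sum₂, Ssum_eq_geom_sum₂, Nat.add_sub_cancel]
  exact geom_sum₂_succ_le (by positivity) (by positivity) (by linarith) (by omega)

/-- If `0 ≤ a ≤ a₂ ≤ 1` and `a² + a₂² ≤ 1`, then the sequence `S_k` over odd `k ≥ 5`
(i.e. `s ≥ 2`) is decreasing: `S_{k+2} ≤ S_k`. -/
theorem Ssum_decreasing (a a₂ : ℝ) (ha : 0 ≤ a) (hle : a ≤ a₂) (ha₂ : a₂ ≤ 1)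
    (hsq : a ^ 2 + a₂ ^ 2 ≤ 1) :
    ∀ s : ℕ, 2 ≤ s → Ssum a a₂ (s + 1) ≤ Ssum a a₂ s :=
  Ssum_decreasing_general a a₂ hsq
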